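/- On the invariant interval [b, c), the restricted plCNV map is affinely conjugate to a β-transformation: if g(x) = (1+m₁)x − m₁ a − α − β H(x−d) on [b,c) (with b, c as above, b < d < c, and all of [b,c] ⊆ [J_min, J_max]), then the map h(y) = (g(b + (c−b)y) − b)/(c−b) on [0,1) has the form h(y) = β̃ y + α̃ (mod 1)-type piecewise affine map with slope β̃ = 1 + m₁ on both branches and a single discontinuity at (d−b)/(c−b). -/

import Mathlib

/-!
The affine change of variables `x = b + (c - b) y` turns any affine map `x ↦ s x + t` into the
affine map `y ↦ s y + (s b + t - b) / (c - b)` of the same slope, and turns a downward jump of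
size `c - b` into a jump of size `1`. Since `c = s d + t` is the left limit of `g` at `d` and
`b = c - β` its value there, the left branch of the conjugate reaches `1` at `(d - b) / (c - b)`
and the right branch starts from `0`.
-/

lemma le_add_sub_mul_iff_div_le {b c d y : ℝ} (hbc : b < c) :
    d ≤ b + (c - b) * y ↔ (d - b) / (c - b) ≤ y := by
  rw [div_le_iff₀ (sub_pos.2 hbc)]
  constructor <;> intro h <;> linarith

lemma affine_conj_rescale (s t b c y : ℝ) (hbc : c - b ≠ 0) :
    (s * (b + (c - b) * y) + t - b) / (c - b) = s * y + (s * b + t - b) / (c - b) := by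
  field_simp
  ring

lemma affine_conj_rescale_at_threshold (s t d b c : ℝ) (hbc : c - b ≠ 0)
    (hc : c = s * d + t) :
    s * ((d - b) / (c - b)) + (s * b + t - b) / (c - b) = 1 := by
  rw [← affine_conj_rescale s t b c _ hbc, mul_div_cancel₀ _ hbc, add_sub_cancel, ← hc,
    div_self hbc]

lemma affine_jump_conj_rescale (s t d b c y : ℝ) (hbc : b < c) :
    (s * (b + (c - b) * y) + t - (c - b) * (if d ≤ b + (c - b) * y then 1 else 0) - b) / (c - b)
      = if y < (d - b) / (c - b) then s * y + (s * b + t - b) / (c - b)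
        else s * y + ((s * b + t - b) / (c - b) - 1) := by
  have hbc' : c - b ≠ 0 := (sub_pos.2 hbc).ne'
  by_cases hy : y < (d - b) / (c - b)
  · have hlt : ¬ d ≤ b + (c - b) * y := by rwa [le_add_sub_mul_iff_div_le hbc, not_le]
    rw [if_neg hlt, if_pos hy, mul_zero, sub_zero, affine_conj_rescale s t b c y hbc']
  · have hle : d ≤ b + (c - b) * y := (le_add_sub_mul_iff_div_le hbc).2 (not_lt.1 hy)
    rw [if_pos hle, if_neg hy, mul_one, sub_right_comm, sub_div, div_self hbc',
      affine_conj_rescale s t b c y hbc', add_sub_assoc]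

theorem plCNV_conjugate_to_betaTransformation_general (m1 a α β d b c : ℝ)
    (hb : b = d + m1 * (d - a) - α - β) (hc : c = d + m1 * (d - a) - α)
    (hbd : b < d) (hdc : d < c) :
    ∃ α₁ α₂ : ℝ,
      (∀ y ∈ Set.Ico (0:ℝ) 1,
        ((fun x : ℝ => (1 + m1) * x - m1 * a - α - β * (if d ≤ x then 1 else 0))
            (b + (c - b) * y) - b) / (c - b)
          = if y < (d - b) / (c - b) then (1 + m1) * y + α₁ else (1 + m1) * y + α₂) ∧
      (1 + m1) * ((d - b) / (c - b)) + α₁ = 1 ∧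
      (1 + m1) * ((d - b) / (c - b)) + α₂ = 0 := by
  have hβ : β = c - b := by rw [hb, hc]; ring
  have hbc : b < c := hbd.trans hdc
  have hc' : c = (1 + m1) * d + (-(m1 * a) - α) := by rw [hc]; ring
  set α₁ := ((1 + m1) * b + (-(m1 * a) - α) - b) / (c - b)
  have hleft : (1 + m1) * ((d - b) / (c - b)) + α₁ = 1 :=
    affine_conj_rescale_at_threshold _ _ d b c (sub_pos.2 hbc).ne' hc'
  refine ⟨α₁, α₁ - 1, fun y _ => ?_, hleft, by linarith⟩
  rw [← affine_jump_conj_rescale _ _ d b c y hbc, hβ]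
  congr 1
  ring

/-- On the invariant interval `[b,c)` the restricted plCNV map is affinely conjugate
to a piecewise affine map of `[0,1)` with slope `1 + m₁` on both branches and a single
discontinuity at `(d-b)/(c-b)`, the left branch tending to `1` there and the right
branch taking value `0` there. -/
theorem plCNV_conjugate_to_betaTransformation (m0 m1 a α β d b c : ℝ)
    (hm0 : 0 < m0) (hm1 : 0 < m1) (ha0 : 0 < a) (ha1 : a < 1)
    (hb : b = d + m1 * (d - a) - α - β) (hc : c = d + m1 * (d - a) - α)
    (hbd : b < d) (hdc : d < c)
    (hJmin : a * m1 / (m0 + m1) ≤ b) (hJmax : c ≤ (m0 + a * m1) / (m0 + m1))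
    (hinv : Set.MapsTo
      (fun x : ℝ => (1 + m1) * x - m1 * a - α - β * (if d ≤ x then 1 else 0))
      (Set.Ico b c) (Set.Ico b c)) :
    ∃ α₁ α₂ : ℝ,
      (∀ y ∈ Set.Ico (0:ℝ) 1,
        ((fun x : ℝ => (1 + m1) * x - m1 * a - α - β * (if d ≤ x then 1 else 0))
            (b + (c - b) * y) - b) / (c - b)
          = if y < (d - b) / (c - b) then (1 + m1) * y + α₁ else (1 + m1) * y + α₂) ∧
      (1 + m1) * ((d - b) / (c - b)) + α₁ = 1 ∧
      (1 + m1) * ((d - b) / (c - b)) + α₂ = 0 :=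
  plCNV_conjugate_to_betaTransformation_general m1 a α β d b c hb hc hbd hdc
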